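/- arXiv:1501.00616 — 2 statements merged into one kernel-verified Lean document; each statement's English description precedes it below -/
import Mathlib

section
/- Suppose that (N1), (N2) and (N3) hold on U, and let m := 1 + 4 Ω^{−2} ∂_u r ∂_ū r. Let u₀ and ū₀ < ū₁ be such that the segment {u₀} × [ū₀, ū₁] lies in U, and suppose ∂_u r ≤ 0 ≤ ∂_ū r along this segment. Then 4κ ∫_{ū₀}^{ū₁} ( Ω^{−2} r (∂_ū φ)² (−∂_u r) )(u₀, ū) dū ≤ m(u₀, ū₁) − m(u₀, ū₀). In particular, if m(u₀, ū₀) ≥ 0 and m(u₀, ū₁) ≤ 1, then the left-hand side is at most 1. -/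
/-!
Write the mass as `m = 1 + 4 (Ω⁻² ∂_ū r) ∂_u r` and differentiate it in `ū` along the segment:
(N2) gives `∂_ū (Ω⁻² ∂_ū r) = -Ω⁻² κ r (∂_ū φ)²`, and (N3), after commuting the mixed partials of
`r`, gives `∂_ū ∂_u r = κ Ω² g(φ)² / (4r)`. Hence
`∂_ū m = 4κ Ω⁻² r (∂_ū φ)² (-∂_u r) + κ g(φ)² ∂_ū r / r`, whose last term is nonnegative since
`∂_ū r ≥ 0` and `r > 0`. Integrating this differential inequality over `[ū₀, ū₁]` gives the bound.
-/

open Real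

/-- Partial derivative in the null variable `u`. -/
noncomputable def pdu (f : ℝ → ℝ → ℝ) (u v : ℝ) : ℝ := deriv (fun u' => f u' v) u

/-- Partial derivative in the null variable `ū`. -/
noncomputable def pdub (f : ℝ → ℝ → ℝ) (u v : ℝ) : ℝ := deriv (fun v' => f u v') v

/-- The mass `m = 1 + 4 Ω^{−2} ∂_u r ∂_ū r`. -/
noncomputable def mass (Ω r : ℝ → ℝ → ℝ) (u v : ℝ) : ℝ :=
  1 + 4 * ((Ω u v) ^ 2)⁻¹ * pdu r u v * pdub r u v

open Function Set Filter Topology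

theorem ContDiffOn.differentiableAt_of_isOpen {𝕜 E F : Type*} [NontriviallyNormedField 𝕜]
    [NormedAddCommGroup E] [NormedSpace 𝕜 E] [NormedAddCommGroup F] [NormedSpace 𝕜 F]
    {n : WithTop ℕ∞} {f : E → F} {s : Set E} (hf : ContDiffOn 𝕜 n f s) (hs : IsOpen s)
    (hn : n ≠ 0) {x : E} (hx : x ∈ s) : DifferentiableAt 𝕜 f x :=
  (hf.differentiableOn hn).differentiableAt (hs.mem_nhds hx)

section PartialDerivatives

variable {F : ℝ → ℝ → ℝ} {U : Set (ℝ × ℝ)} {u v : ℝ}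

theorem hasDerivAt_pdub (h : DifferentiableAt ℝ (uncurry F) (u, v)) :
    HasDerivAt (F u) (pdub F u v) v :=
  (h.comp (f := fun v' => (u, v')) v
    ((differentiableAt_const u).prodMk differentiableAt_id)).hasDerivAt

theorem pdu_eq_fderiv (h : DifferentiableAt ℝ (uncurry F) (u, v)) :
    pdu F u v = fderiv ℝ (uncurry F) (u, v) (1, 0) :=
  (h.hasFDerivAt.comp_hasDerivAt (f := fun u' => (u', v)) u
    ((hasDerivAt_id' u).prodMk (hasDerivAt_const u v))).deriv

theorem pdub_eq_fderiv (h : DifferentiableAt ℝ (uncurry F) (u, v)) :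
    pdub F u v = fderiv ℝ (uncurry F) (u, v) (0, 1) :=
  (h.hasFDerivAt.comp_hasDerivAt (f := fun v' => (u, v')) v
    ((hasDerivAt_const v u).prodMk (hasDerivAt_id' v))).deriv

theorem ContDiffOn.uncurry_pdu {m n : WithTop ℕ∞} (hF : ContDiffOn ℝ n (uncurry F) U)
    (hU : IsOpen U) (hmn : m + 1 ≤ n) : ContDiffOn ℝ m (uncurry (pdu F)) U :=
  ((hF.fderiv_of_isOpen hU hmn).clm_apply (contDiffOn_const (c := ((1 : ℝ), (0 : ℝ))))).congr
    fun _ hp => pdu_eq_fderiv (hF.differentiableAt_of_isOpen hU (by rintro rfl; simp at hmn) hp)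

theorem ContDiffOn.uncurry_pdub {m n : WithTop ℕ∞} (hF : ContDiffOn ℝ n (uncurry F) U)
    (hU : IsOpen U) (hmn : m + 1 ≤ n) : ContDiffOn ℝ m (uncurry (pdub F)) U :=
  ((hF.fderiv_of_isOpen hU hmn).clm_apply (contDiffOn_const (c := ((0 : ℝ), (1 : ℝ))))).congr
    fun _ hp => pdub_eq_fderiv (hF.differentiableAt_of_isOpen hU (by rintro rfl; simp at hmn) hp)

theorem pdu_pdub_comm (hF : ContDiffOn ℝ 2 (uncurry F) U) (hU : IsOpen U) (hp : (u, v) ∈ U) :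
    pdu (pdub F) u v = pdub (pdu F) u v := by
  have hF' : ContDiffAt ℝ 2 (uncurry F) (u, v) := hF.contDiffAt (hU.mem_nhds hp)
  have hD : DifferentiableAt ℝ (fderiv ℝ (uncurry F)) (u, v) :=
    (hF'.fderiv_right (m := 1) le_rfl).differentiableAt one_ne_zero
  have hpdu : uncurry (pdu F) =ᶠ[𝓝 (u, v)] fun q => fderiv ℝ (uncurry F) q (1, 0) := by
    filter_upwards [hU.mem_nhds hp] with q hq
    exact pdu_eq_fderiv (hF.differentiableAt_of_isOpen hU two_ne_zero hq)
  have hpdub : uncurry (pdub F) =ᶠ[𝓝 (u, v)] fun q => fderiv ℝ (uncurry F) q (0, 1) := by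
    filter_upwards [hU.mem_nhds hp] with q hq
    exact pdub_eq_fderiv (hF.differentiableAt_of_isOpen hU two_ne_zero hq)
  rw [pdu_eq_fderiv ((hF.uncurry_pdub hU le_rfl).differentiableAt_of_isOpen hU one_ne_zero hp),
    pdub_eq_fderiv ((hF.uncurry_pdu hU le_rfl).differentiableAt_of_isOpen hU one_ne_zero hp),
    hpdu.fderiv_eq, hpdub.fderiv_eq, fderiv_clm_apply hD (differentiableAt_const _),
    fderiv_clm_apply hD (differentiableAt_const _)]
  simpa using hF'.isSymmSndFDerivAt (by simp) (1, 0) (0, 1)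

theorem hasDerivAt_mass {Ω r : ℝ → ℝ → ℝ} (hΩ : DifferentiableAt ℝ (uncurry Ω) (u, v))
    (hΩ0 : Ω u v ≠ 0) (hr : ContDiffOn ℝ 2 (uncurry r) U) (hU : IsOpen U) (hp : (u, v) ∈ U) :
    HasDerivAt (mass Ω r u)
      (4 * (pdub (fun a b => (Ω a b ^ 2)⁻¹ * pdub r a b) u v * pdu r u v
        + (Ω u v ^ 2)⁻¹ * pdub r u v * pdu (pdub r) u v)) v := by
  have hQ : HasDerivAt (fun v' => (Ω u v' ^ 2)⁻¹ * pdub r u v')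
      (pdub (fun a b => (Ω a b ^ 2)⁻¹ * pdub r a b) u v) v :=
    ((((hasDerivAt_pdub hΩ).differentiableAt.pow 2).inv (pow_ne_zero 2 hΩ0)).mul
      (hasDerivAt_pdub ((hr.uncurry_pdub hU le_rfl).differentiableAt_of_isOpen hU one_ne_zero
        hp)).differentiableAt).hasDerivAt
  have hA : HasDerivAt (pdu r u) (pdu (pdub r) u v) v := by
    rw [pdu_pdub_comm hr hU hp]
    exact hasDerivAt_pdub ((hr.uncurry_pdu hU le_rfl).differentiableAt_of_isOpen hU one_ne_zero hp)
  have hmass : mass Ω r u = fun v' => 1 + 4 * ((Ω u v' ^ 2)⁻¹ * pdub r u v' * pdu r u v') := by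
    funext v'
    simp only [mass]
    ring
  rw [hmass]
  exact ((hQ.mul hA).const_mul 4).const_add 1

theorem continuousOn_flux_density {Ω r φ : ℝ → ℝ → ℝ} {s : Set ℝ} (hU : IsOpen U)
    (hΩ : ContinuousOn (uncurry Ω) U) (hr : ContDiffOn ℝ 1 (uncurry r) U)
    (hφ : ContDiffOn ℝ 1 (uncurry φ) U) (hΩ0 : ∀ p ∈ U, Ω p.1 p.2 ≠ 0)
    (hs : MapsTo (u, ·) s U) :
    ContinuousOn (fun v => (Ω u v ^ 2)⁻¹ * r u v * pdub φ u v ^ 2 * -pdu r u v) s := by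
  have hslice : ∀ {G : ℝ → ℝ → ℝ}, ContinuousOn (uncurry G) U → ContinuousOn (G u) s :=
    fun hG => hG.comp (by fun_prop) hs
  have hΩ2 : ContinuousOn (fun v => (Ω u v ^ 2)⁻¹) s :=
    ((hslice hΩ).pow 2).inv₀ fun v hv => pow_ne_zero 2 (hΩ0 _ (hs hv))
  exact ((hΩ2.mul (hslice hr.continuousOn)).mul
    ((hslice (hφ.uncurry_pdub hU (m := 0) le_rfl).continuousOn).pow 2)).mul
    (hslice (hr.uncurry_pdu hU (m := 0) le_rfl).continuousOn).neg

end PartialDerivatives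

theorem mass_deriv_eq_flux_add {κ w ρ a b p γ : ℝ} (hw : w ≠ 0) (hρ : ρ ≠ 0) :
    4 * (-((w ^ 2)⁻¹ * κ * ρ * p ^ 2) * a + (w ^ 2)⁻¹ * b * (κ * w ^ 2 * γ ^ 2 / (4 * ρ)))
      = 4 * κ * ((w ^ 2)⁻¹ * ρ * p ^ 2 * -a) + κ * γ ^ 2 * b / ρ := by
  field_simp

theorem mass_flux_bound_general
    (κ : ℝ) (hκ : 0 < κ)
    (g : ℝ → ℝ)
    (U : Set (ℝ × ℝ)) (hU : IsOpen U)
    (Ω r φ : ℝ → ℝ → ℝ)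
    (hΩ : ContDiffOn ℝ 2 (fun p : ℝ × ℝ => Ω p.1 p.2) U)
    (hr : ContDiffOn ℝ 2 (fun p : ℝ × ℝ => r p.1 p.2) U)
    (hφ : ContDiffOn ℝ 2 (fun p : ℝ × ℝ => φ p.1 p.2) U)
    (hΩpos : ∀ p ∈ U, 0 < Ω p.1 p.2)
    (hrpos : ∀ p ∈ U, 0 < r p.1 p.2)
    (hN2 : ∀ u v : ℝ, (u, v) ∈ U →
      pdub (fun u' v' => ((Ω u' v') ^ 2)⁻¹ * pdub r u' v') u v
        = -(((Ω u v) ^ 2)⁻¹ * κ * r u v * (pdub φ u v) ^ 2))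
    (hN3 : ∀ u v : ℝ, (u, v) ∈ U →
      pdu (pdub r) u v = κ * (Ω u v) ^ 2 * (g (φ u v)) ^ 2 / (4 * r u v))
    (u₀ ub₀ ub₁ : ℝ) (h01 : ub₀ < ub₁)
    (hseg : ∀ v ∈ Set.Icc ub₀ ub₁, (u₀, v) ∈ U)
    (hmono : ∀ v ∈ Set.Icc ub₀ ub₁, pdu r u₀ v ≤ 0 ∧ 0 ≤ pdub r u₀ v) :
    (4 * κ * ∫ v in ub₀..ub₁,
        ((Ω u₀ v) ^ 2)⁻¹ * r u₀ v * (pdub φ u₀ v) ^ 2 * (-(pdu r u₀ v)))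
      ≤ mass Ω r u₀ ub₁ - mass Ω r u₀ ub₀
    ∧ (0 ≤ mass Ω r u₀ ub₀ → mass Ω r u₀ ub₁ ≤ 1 →
        (4 * κ * ∫ v in ub₀..ub₁,
            ((Ω u₀ v) ^ 2)⁻¹ * r u₀ v * (pdub φ u₀ v) ^ 2 * (-(pdu r u₀ v))) ≤ 1) := by
  have hderiv : ∀ v ∈ Icc ub₀ ub₁, HasDerivAt (mass Ω r u₀)
      (4 * κ * ((Ω u₀ v ^ 2)⁻¹ * r u₀ v * pdub φ u₀ v ^ 2 * -pdu r u₀ v)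
        + κ * g (φ u₀ v) ^ 2 * pdub r u₀ v / r u₀ v) v := by
    intro v hv
    have hp := hseg v hv
    have h := hasDerivAt_mass (hΩ.differentiableAt_of_isOpen hU two_ne_zero hp)
      (hΩpos _ hp).ne' hr hU hp
    rwa [hN2 _ _ hp, hN3 _ _ hp, mass_deriv_eq_flux_add (hΩpos _ hp).ne' (hrpos _ hp).ne'] at h
  have hflux : ContinuousOn
      (fun v => 4 * κ * ((Ω u₀ v ^ 2)⁻¹ * r u₀ v * pdub φ u₀ v ^ 2 * -pdu r u₀ v))
      (Icc ub₀ ub₁) :=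
    continuousOn_const.mul (continuousOn_flux_density hU hΩ.continuousOn (hr.of_le one_le_two)
      (hφ.of_le one_le_two) (fun p hp => (hΩpos p hp).ne') hseg)
  have hflux_le := intervalIntegral.integral_le_sub_of_hasDeriv_right_of_le h01.le
    (fun v hv => (hderiv v hv).continuousAt.continuousWithinAt)
    (fun v hv => (hderiv v (Ioo_subset_Icc_self hv)).hasDerivWithinAt)
    hflux.integrableOn_Icc fun v hv => by
      have hrv : 0 ≤ pdub r u₀ v := (hmono v (Ioo_subset_Icc_self hv)).2
      have hr0 : 0 < r u₀ v := hrpos _ (hseg v (Ioo_subset_Icc_self hv))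
      exact le_add_of_nonneg_right (by positivity)
  rw [intervalIntegral.integral_const_mul] at hflux_le
  exact ⟨hflux_le, fun h0 h1 => by linarith⟩

/-- Flux estimate: given (N1), (N2), (N3) on `U` and a null segment `{u₀} × [ub₀, ub₁] ⊆ U`
on which `∂_u r ≤ 0 ≤ ∂_ū r`, one has
`4κ ∫_{ub₀}^{ub₁} Ω^{−2} r (∂_ūφ)² (−∂_u r)(u₀,ū) dū ≤ m(u₀,ub₁) − m(u₀,ub₀)`;
in particular, if `m(u₀,ub₀) ≥ 0` and `m(u₀,ub₁) ≤ 1`, the flux is at most `1`. -/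
theorem mass_flux_bound
    (κ : ℝ) (hκ : 0 < κ)
    (g : ℝ → ℝ) (hg : ContDiff ℝ 1 g)
    (U : Set (ℝ × ℝ)) (hU : IsOpen U)
    (Ω r φ : ℝ → ℝ → ℝ)
    (hΩ : ContDiffOn ℝ 2 (fun p : ℝ × ℝ => Ω p.1 p.2) U)
    (hr : ContDiffOn ℝ 2 (fun p : ℝ × ℝ => r p.1 p.2) U)
    (hφ : ContDiffOn ℝ 2 (fun p : ℝ × ℝ => φ p.1 p.2) U)
    (hΩpos : ∀ p ∈ U, 0 < Ω p.1 p.2)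
    (hrpos : ∀ p ∈ U, 0 < r p.1 p.2)
    (hN1 : ∀ u v : ℝ, (u, v) ∈ U →
      pdu (fun u' v' => ((Ω u' v') ^ 2)⁻¹ * pdu r u' v') u v
        = -(((Ω u v) ^ 2)⁻¹ * κ * r u v * (pdu φ u v) ^ 2))
    (hN2 : ∀ u v : ℝ, (u, v) ∈ U →
      pdub (fun u' v' => ((Ω u' v') ^ 2)⁻¹ * pdub r u' v') u v
        = -(((Ω u v) ^ 2)⁻¹ * κ * r u v * (pdub φ u v) ^ 2))
    (hN3 : ∀ u v : ℝ, (u, v) ∈ U →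
      pdu (pdub r) u v = κ * (Ω u v) ^ 2 * (g (φ u v)) ^ 2 / (4 * r u v))
    (u₀ ub₀ ub₁ : ℝ) (h01 : ub₀ < ub₁)
    (hseg : ∀ v ∈ Set.Icc ub₀ ub₁, (u₀, v) ∈ U)
    (hmono : ∀ v ∈ Set.Icc ub₀ ub₁, pdu r u₀ v ≤ 0 ∧ 0 ≤ pdub r u₀ v) :
    (4 * κ * ∫ v in ub₀..ub₁,
        ((Ω u₀ v) ^ 2)⁻¹ * r u₀ v * (pdub φ u₀ v) ^ 2 * (-(pdu r u₀ v)))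
      ≤ mass Ω r u₀ ub₁ - mass Ω r u₀ ub₀
    ∧ (0 ≤ mass Ω r u₀ ub₀ → mass Ω r u₀ ub₁ ≤ 1 →
        (4 * κ * ∫ v in ub₀..ub₁,
            ((Ω u₀ v) ^ 2)⁻¹ * r u₀ v * (pdub φ u₀ v) ^ 2 * (-(pdu r u₀ v))) ≤ 1) :=
  mass_flux_bound_general κ hκ g U hU Ω r φ hΩ hr hφ hΩpos hrpos hN2 hN3 u₀ ub₀ ub₁ h01 hseg hmono
end

section
/- Suppose that only the wave equation (E4) holds on U ∩ {r > 0}. Set Tφ := e^{−α}∂_tφ, Rφ := e^{−β}∂_rφ, L₀ := (1/2)( −(Tφ)² + (Rφ)² + 𝐟 ) − 2 g(φ) g′(φ) ∂_rφ / r, and L := (r e^{α} ∂_rα / 2)( (Tφ)² + (Rφ)² − 𝐟 ) + e^{α} L₀ − r (∂_tβ) e^{β} 𝐦. Then at every point of U with r > 0: ∂_t( r e^{β} 𝐦 ) − ∂_r( r e^{α} 𝐞 ) = L. -/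
/-!
Since `r e^β 𝐦 = r e^{-α} ∂_tφ ∂_rφ`, its time derivative does not involve `∂_tβ`; expanding it
and the radial derivative of `r e^α 𝐞` by the product and chain rules, the only second-order
terms are `∂_t²φ ∂_rφ`, `∂_r²φ ∂_rφ` and the two mixed ones. The mixed derivatives cancel by the
symmetry of second derivatives of the `C²` map `φ`, and the pure ones are exactly those of `(E4)`
multiplied by `-r e^α ∂_rφ`; after subtracting that multiple of `(E4)` what is left is an
identity of rational expressions in `e^α`, `e^β`, `r` and the first derivatives.
-/

open Real

/-- Partial derivative in the time variable `t`. -/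
noncomputable def pdt (f : ℝ → ℝ → ℝ) (t r : ℝ) : ℝ := deriv (fun t' => f t' r) t

/-- Partial derivative in the radial variable `r`. -/
noncomputable def pdr (f : ℝ → ℝ → ℝ) (t r : ℝ) : ℝ := deriv (fun r' => f t r') r

/-- The energy density 𝐞. -/
noncomputable def eDen (g : ℝ → ℝ) (α β φ : ℝ → ℝ → ℝ) (t r : ℝ) : ℝ :=
  (1 / 2) * (exp (-(2 * α t r)) * (pdt φ t r) ^ 2 + exp (-(2 * β t r)) * (pdr φ t r) ^ 2
    + (g (φ t r)) ^ 2 / r ^ 2)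

/-- The momentum density 𝐦. -/
noncomputable def mDen (α β φ : ℝ → ℝ → ℝ) (t r : ℝ) : ℝ :=
  exp (-(α t r + β t r)) * pdt φ t r * pdr φ t r

/-- `Tφ = e^{−α} ∂_t φ`. -/
noncomputable def Tphi (α φ : ℝ → ℝ → ℝ) (t r : ℝ) : ℝ := exp (-(α t r)) * pdt φ t r

/-- `Rφ = e^{−β} ∂_r φ`. -/
noncomputable def Rphi (β φ : ℝ → ℝ → ℝ) (t r : ℝ) : ℝ := exp (-(β t r)) * pdr φ t r

/-- `L₀ = (1/2)(−(Tφ)² + (Rφ)² + 𝐟) − 2 g(φ) g′(φ) ∂_r φ / r`. -/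
noncomputable def L0 (g : ℝ → ℝ) (α β φ : ℝ → ℝ → ℝ) (t r : ℝ) : ℝ :=
  (1 / 2) * (-(Tphi α φ t r) ^ 2 + (Rphi β φ t r) ^ 2 + (g (φ t r)) ^ 2 / r ^ 2)
    - 2 * g (φ t r) * deriv g (φ t r) * pdr φ t r / r


open Function Filter Topology

section PartialDerivatives

variable {f : ℝ → ℝ → ℝ} {t r : ℝ}

lemma differentiableAt_slice_fst (hf : DifferentiableAt ℝ (uncurry f) (t, r)) :
    DifferentiableAt ℝ (fun t' => f t' r) t :=
  hf.comp (f := fun t' => (t', r)) t (differentiableAt_id.prodMk (differentiableAt_const r))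

lemma differentiableAt_slice_snd (hf : DifferentiableAt ℝ (uncurry f) (t, r)) :
    DifferentiableAt ℝ (fun r' => f t r') r :=
  hf.comp (f := fun r' => (t, r')) r ((differentiableAt_const t).prodMk differentiableAt_id)

lemma pdt_eq_fderiv (hf : DifferentiableAt ℝ (uncurry f) (t, r)) :
    pdt f t r = fderiv ℝ (uncurry f) (t, r) (1, 0) := by
  have h := hf.hasFDerivAt.comp_hasDerivAt t ((hasDerivAt_id t).prodMk (hasDerivAt_const t r))
  simpa [comp_def, pdt] using h.deriv

lemma pdr_eq_fderiv (hf : DifferentiableAt ℝ (uncurry f) (t, r)) :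
    pdr f t r = fderiv ℝ (uncurry f) (t, r) (0, 1) := by
  have h := hf.hasFDerivAt.comp_hasDerivAt r ((hasDerivAt_const r t).prodMk (hasDerivAt_id r))
  simpa [comp_def, pdr] using h.deriv

variable {U : Set (ℝ × ℝ)} {n : WithTop ℕ∞}

lemma contDiffOn_uncurry_pdt (hU : IsOpen U) (hf : ContDiffOn ℝ (n + 1) (uncurry f) U) :
    ContDiffOn ℝ n (uncurry (pdt f)) U :=
  ((hf.fderiv_of_isOpen hU le_rfl).clm_apply contDiffOn_const).congr fun p hp =>
    pdt_eq_fderiv ((hf.differentiableOn (by simp)).differentiableAt (hU.mem_nhds hp))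

lemma contDiffOn_uncurry_pdr (hU : IsOpen U) (hf : ContDiffOn ℝ (n + 1) (uncurry f) U) :
    ContDiffOn ℝ n (uncurry (pdr f)) U :=
  ((hf.fderiv_of_isOpen hU le_rfl).clm_apply contDiffOn_const).congr fun p hp =>
    pdr_eq_fderiv ((hf.differentiableOn (by simp)).differentiableAt (hU.mem_nhds hp))

lemma pdt_pdr_eq_pdr_pdt (hU : IsOpen U) (hf : ContDiffOn ℝ 2 (uncurry f) U) (hp : (t, r) ∈ U) :
    pdt (pdr f) t r = pdr (pdt f) t r := by
  have hf' : ContDiffOn ℝ (1 + 1) (uncurry f) U := hf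
  have hD : DifferentiableAt ℝ (fderiv ℝ (uncurry f)) (t, r) :=
    ((hf'.fderiv_of_isOpen hU le_rfl).differentiableOn one_ne_zero).differentiableAt
      (hU.mem_nhds hp)
  have hpartial : ∀ v w, fderiv ℝ (fun p => fderiv ℝ (uncurry f) p w) (t, r) v
      = fderiv ℝ (fderiv ℝ (uncurry f)) (t, r) v w := fun v w => by
    simp [fderiv_clm_apply hD (differentiableAt_const w)]
  have hdiff : ∀ p ∈ U, DifferentiableAt ℝ (uncurry f) p := fun p hp =>
    (hf.differentiableOn (by simp)).differentiableAt (hU.mem_nhds hp)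
  have hpdt : uncurry (pdt f) =ᶠ[𝓝 (t, r)] fun p => fderiv ℝ (uncurry f) p (1, 0) :=
    eventually_of_mem (hU.mem_nhds hp) fun p hp => pdt_eq_fderiv (hdiff p hp)
  have hpdr : uncurry (pdr f) =ᶠ[𝓝 (t, r)] fun p => fderiv ℝ (uncurry f) p (0, 1) :=
    eventually_of_mem (hU.mem_nhds hp) fun p hp => pdr_eq_fderiv (hdiff p hp)
  have hdiffAt : ∀ {h : ℝ × ℝ → ℝ}, ContDiffOn ℝ 1 h U → DifferentiableAt ℝ h (t, r) := fun hh =>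
    (hh.differentiableOn one_ne_zero).differentiableAt (hU.mem_nhds hp)
  calc pdt (pdr f) t r = fderiv ℝ (fderiv ℝ (uncurry f)) (t, r) (1, 0) (0, 1) := by
        rw [pdt_eq_fderiv (hdiffAt (contDiffOn_uncurry_pdr hU hf')), hpdr.fderiv_eq, hpartial]
    _ = fderiv ℝ (fderiv ℝ (uncurry f)) (t, r) (0, 1) (1, 0) :=
        (hf.contDiffAt (hU.mem_nhds hp)).isSymmSndFDerivAt (by simp) _ _
    _ = pdr (pdt f) t r := by
        rw [pdr_eq_fderiv (hdiffAt (contDiffOn_uncurry_pdt hU hf')), hpdt.fderiv_eq, hpartial]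

end PartialDerivatives

section RadialCurrent

variable {g : ℝ → ℝ} {α β φ : ℝ → ℝ → ℝ} {t r : ℝ}

lemma pdt_radial_momentum (hα : DifferentiableAt ℝ (fun t' => α t' r) t)
    (hφt : DifferentiableAt ℝ (fun t' => pdt φ t' r) t)
    (hφr : DifferentiableAt ℝ (fun t' => pdr φ t' r) t) :
    pdt (fun t' r' => r' * exp (β t' r') * mDen α β φ t' r') t r
      = r * exp (-α t r) * (pdt (pdt φ) t r * pdr φ t r + pdt φ t r * pdt (pdr φ) t r
          - pdt α t r * pdt φ t r * pdr φ t r) := by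
  have hcancel : (fun t' => r * exp (β t' r) * mDen α β φ t' r)
      = fun t' => r * (exp (-α t' r) * pdt φ t' r * pdr φ t' r) := by
    funext t'
    rw [mDen, neg_add, exp_add, exp_neg (β t' r)]
    field_simp
  have h := ((hα.hasDerivAt.fun_neg.exp.fun_mul hφt.hasDerivAt).fun_mul hφr.hasDerivAt).const_mul r
  rw [pdt, hcancel, h.deriv]
  simp only [pdt]
  ring

lemma hasDerivAt_eDen (hr : r ≠ 0) (hg : DifferentiableAt ℝ g (φ t r))
    (hα : DifferentiableAt ℝ (fun r' => α t r') r) (hβ : DifferentiableAt ℝ (fun r' => β t r') r)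
    (hφ : DifferentiableAt ℝ (fun r' => φ t r') r)
    (hφt : DifferentiableAt ℝ (fun r' => pdt φ t r') r)
    (hφr : DifferentiableAt ℝ (fun r' => pdr φ t r') r) :
    HasDerivAt (fun r' => eDen g α β φ t r')
      (exp (-(2 * α t r)) * pdt φ t r * (pdr (pdt φ) t r - pdr α t r * pdt φ t r)
        + exp (-(2 * β t r)) * pdr φ t r * (pdr (pdr φ) t r - pdr β t r * pdr φ t r)
        + g (φ t r) * deriv g (φ t r) * pdr φ t r / r ^ 2 - g (φ t r) ^ 2 / r ^ 3) r := by
  have hgφ : HasDerivAt (fun r' => g (φ t r')) (deriv g (φ t r) * pdr φ t r) r :=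
    hg.hasDerivAt.comp r hφ.hasDerivAt
  have hT := (hα.hasDerivAt.const_mul 2).fun_neg.exp.fun_mul (hφt.hasDerivAt.fun_pow 2)
  have hR := (hβ.hasDerivAt.const_mul 2).fun_neg.exp.fun_mul (hφr.hasDerivAt.fun_pow 2)
  have hF := (hgφ.fun_pow 2).fun_div (hasDerivAt_pow 2 r) (pow_ne_zero 2 hr)
  refine (((hT.fun_add hR).fun_add hF).const_mul (1 / 2 : ℝ)).congr_deriv ?_
  simp only [pdr]
  field_simp
  ring

lemma pdr_radial_energy (hr : r ≠ 0) (hg : DifferentiableAt ℝ g (φ t r))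
    (hα : DifferentiableAt ℝ (fun r' => α t r') r) (hβ : DifferentiableAt ℝ (fun r' => β t r') r)
    (hφ : DifferentiableAt ℝ (fun r' => φ t r') r)
    (hφt : DifferentiableAt ℝ (fun r' => pdt φ t r') r)
    (hφr : DifferentiableAt ℝ (fun r' => pdr φ t r') r) :
    pdr (fun t' r' => r' * exp (α t' r') * eDen g α β φ t' r') t r
      = exp (α t r) * (1 + r * pdr α t r) * eDen g α β φ t r
        + r * exp (α t r) *
          (exp (-(2 * α t r)) * pdt φ t r * (pdr (pdt φ) t r - pdr α t r * pdt φ t r)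
          + exp (-(2 * β t r)) * pdr φ t r * (pdr (pdr φ) t r - pdr β t r * pdr φ t r)
          + g (φ t r) * deriv g (φ t r) * pdr φ t r / r ^ 2 - g (φ t r) ^ 2 / r ^ 3) := by
  have h := ((hasDerivAt_id' r).fun_mul hα.hasDerivAt.exp).fun_mul
    (hasDerivAt_eDen hr hg hα hβ hφ hφt hφr)
  rw [pdr, h.deriv]
  simp only [pdr]
  ring

end RadialCurrent

theorem radial_current_identity_general
    (g : ℝ → ℝ) (hg : ContDiff ℝ 1 g)
    (U : Set (ℝ × ℝ)) (hU : IsOpen U)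
    (α β φ : ℝ → ℝ → ℝ)
    (hα : ContDiffOn ℝ 2 (fun p : ℝ × ℝ => α p.1 p.2) U)
    (hβ : ContDiffOn ℝ 2 (fun p : ℝ × ℝ => β p.1 p.2) U)
    (hφ : ContDiffOn ℝ 2 (fun p : ℝ × ℝ => φ p.1 p.2) U)
    (hE4 : ∀ t r : ℝ, (t, r) ∈ U → 0 < r →
      -(exp (-(2 * α t r)) * (pdt (pdt φ) t r + (pdt β t r - pdt α t r) * pdt φ t r))
        + exp (-(2 * β t r)) * (pdr (pdr φ) t r + pdr φ t r / r
            + (pdr α t r - pdr β t r) * pdr φ t r)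
      = g (φ t r) * deriv g (φ t r) / r ^ 2) :
    ∀ t r : ℝ, (t, r) ∈ U → 0 < r →
      pdt (fun t' r' => r' * exp (β t' r') * mDen α β φ t' r') t r
        - pdr (fun t' r' => r' * exp (α t' r') * eDen g α β φ t' r') t r
      = (r * exp (α t r) * pdr α t r / 2) *
          ((Tphi α φ t r) ^ 2 + (Rphi β φ t r) ^ 2 - (g (φ t r)) ^ 2 / r ^ 2)
        + exp (α t r) * L0 g α β φ t r
        - r * pdt β t r * exp (β t r) * mDen α β φ t r := by
  intro t r hp hr
  have hdiff : ∀ {f : ℝ → ℝ → ℝ}, ContDiffOn ℝ 1 (uncurry f) U →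
      DifferentiableAt ℝ (uncurry f) (t, r) := fun hf =>
    (hf.differentiableOn one_ne_zero).differentiableAt (hU.mem_nhds hp)
  have hφ' : ContDiffOn ℝ (1 + 1) (uncurry φ) U := hφ
  have hα₁ := hdiff (hα.of_le one_le_two)
  have hβ₁ := hdiff (hβ.of_le one_le_two)
  have hφ₁ := hdiff (hφ.of_le one_le_two)
  have hφt := hdiff (contDiffOn_uncurry_pdt hU hφ')
  have hφr := hdiff (contDiffOn_uncurry_pdr hU hφ')
  rw [pdt_radial_momentum (differentiableAt_slice_fst hα₁) (differentiableAt_slice_fst hφt)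
      (differentiableAt_slice_fst hφr),
    pdr_radial_energy hr.ne' (hg.differentiable one_ne_zero _) (differentiableAt_slice_snd hα₁)
      (differentiableAt_slice_snd hβ₁) (differentiableAt_slice_snd hφ₁)
      (differentiableAt_slice_snd hφt) (differentiableAt_slice_snd hφr),
    ← pdt_pdr_eq_pdr_pdt hU hφ hp]
  linear_combination (norm := skip) (-r * exp (α t r) * pdr φ t r) * hE4 t r hp hr
  simp only [Tphi, Rphi, L0, mDen, eDen, exp_neg, two_mul, exp_add]
  field_simp
  ring

/-- If only the wave equation (E4) holds on `U ∩ {r > 0}`, then at every point of `U` with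
`r > 0` one has `∂_t(r e^β 𝐦) − ∂_r(r e^α 𝐞) = L`, where
`L = (r e^α ∂_r α / 2)((Tφ)² + (Rφ)² − 𝐟) + e^α L₀ − r (∂_t β) e^β 𝐦`. -/
theorem radial_current_identity
    (κ : ℝ) (hκ : 0 < κ)
    (g : ℝ → ℝ) (hg : ContDiff ℝ 1 g)
    (U : Set (ℝ × ℝ)) (hU : IsOpen U)
    (α β φ : ℝ → ℝ → ℝ)
    (hα : ContDiffOn ℝ 2 (fun p : ℝ × ℝ => α p.1 p.2) U)
    (hβ : ContDiffOn ℝ 2 (fun p : ℝ × ℝ => β p.1 p.2) U)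
    (hφ : ContDiffOn ℝ 2 (fun p : ℝ × ℝ => φ p.1 p.2) U)
    (hE4 : ∀ t r : ℝ, (t, r) ∈ U → 0 < r →
      -(exp (-(2 * α t r)) * (pdt (pdt φ) t r + (pdt β t r - pdt α t r) * pdt φ t r))
        + exp (-(2 * β t r)) * (pdr (pdr φ) t r + pdr φ t r / r
            + (pdr α t r - pdr β t r) * pdr φ t r)
      = g (φ t r) * deriv g (φ t r) / r ^ 2) :
    ∀ t r : ℝ, (t, r) ∈ U → 0 < r →
      pdt (fun t' r' => r' * exp (β t' r') * mDen α β φ t' r') t r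
        - pdr (fun t' r' => r' * exp (α t' r') * eDen g α β φ t' r') t r
      = (r * exp (α t r) * pdr α t r / 2) *
          ((Tphi α φ t r) ^ 2 + (Rphi β φ t r) ^ 2 - (g (φ t r)) ^ 2 / r ^ 2)
        + exp (α t r) * L0 g α β φ t r
        - r * pdt β t r * exp (β t r) * mDen α β φ t r :=
  radial_current_identity_general g hg U hU α β φ hα hβ hφ hE4
end
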